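/- The complex cosine restricted to A is a bijective map from A onto B whose inverse is the complex arccosine: cos ∘ arccos = id on B and arccos ∘ cos = id on A; moreover both maps are continuous, so cos: A → B and arccos: B → A are homeomorphisms. -/

import Mathlib

/-- The real area hyperbolic cosine, `arcosh x = log (x + √(x² − 1))`. -/
noncomputable def arcosh (x : ℝ) : ℝ := Real.log (x + Real.sqrt (x ^ 2 - 1))

/-- `G₋ = √((r²+s²−1)² + 4s²) − (r²+s²)` for `z = r + i·s`. -/
noncomputable def Gminus (z : ℂ) : ℝ :=
  Real.sqrt ((z.re ^ 2 + z.im ^ 2 - 1) ^ 2 + 4 * z.im ^ 2) - (z.re ^ 2 + z.im ^ 2)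

/-- `G₊ = √((r²+s²−1)² + 4s²) + (r²+s²)` for `z = r + i·s`. -/
noncomputable def Gplus (z : ℂ) : ℝ :=
  Real.sqrt ((z.re ^ 2 + z.im ^ 2 - 1) ^ 2 + 4 * z.im ^ 2) + (z.re ^ 2 + z.im ^ 2)

/-- The complex arcsine: `arcsin(r+is) = ½·(sgn r · arccos G₋ + i · sgn s · arcosh G₊)`. -/
noncomputable def carcsin (z : ℂ) : ℂ :=
  (1 / 2 : ℂ) *
    (((Real.sign z.re * Real.arccos (Gminus z) : ℝ) : ℂ) +
      Complex.I * ((Real.sign z.im * arcosh (Gplus z) : ℝ) : ℂ))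

/-- The complex arccosine: `arccos z = π/2 − arcsin z`. -/
noncomputable def carccos (z : ℂ) : ℂ := ((Real.pi / 2 : ℝ) : ℂ) - carcsin z
/-- The set `B = ℂ \ {t ∈ ℝ : t < −1 or t > 1}`. -/
def setB : Set ℂ := {z : ℂ | ¬ (z.im = 0 ∧ (z.re < -1 ∨ 1 < z.re))}

/-- The set `A = {a + i·b : 0 < a < π} ∪ {0, π}`. -/
noncomputable def setA : Set ℂ :=
  {z : ℂ | 0 < z.re ∧ z.re < Real.pi} ∪ {0, ((Real.pi : ℝ) : ℂ)}

/-!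
Write `carcsin z = u + i v` with `u = sgn r · α / 2`, `v = sgn s · β / 2`, `α = arccos G₋`,
`β = arcosh G₊`. Since `-1 ≤ G₋ ≤ 1 ≤ G₊` and
`(1 - G₋)(G₊ + 1) = 4 r²`, `(1 + G₋)(G₊ - 1) = 4 s²`,
the half-angle formulas give `sin u cosh v = sgn r · |r| = r` and `cos u sinh v = sgn s · |s| = s`,
so `sin ∘ carcsin = id` and hence `cos ∘ carccos = id` on `B`. The real part of `carccos z` lies
in `[0, π]` and reaches an endpoint only if `α = π`, i.e. `G₋ = -1`, which forces `s = 0`; so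
`carccos` maps `B` into `A`. From `cos x = cos y ↔ y = 2kπ ± x`, `cos` is injective on `A`, and
the two maps are mutually inverse. The sign factors in `carcsin` are discontinuous only where
the factor they multiply vanishes, which gives continuity of `carccos` on `B`.
-/

namespace Real

lemma sign_mul_abs (x : ℝ) : sign x * |x| = x := by
  rcases lt_trichotomy x 0 with h | rfl | h
  · rw [sign_of_neg h, abs_of_neg h]; ring
  · simp
  · rw [sign_of_pos h, abs_of_pos h, one_mul]

lemma abs_sign_le_one (x : ℝ) : |sign x| ≤ 1 := by
  rcases sign_apply_eq x with h | h | h <;> simp [h]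

lemma sin_sign_mul (x t : ℝ) : sin (sign x * t) = sign x * sin t := by
  rcases sign_apply_eq x with h | h | h <;> simp [h]

lemma sinh_sign_mul (x t : ℝ) : sinh (sign x * t) = sign x * sinh t := by
  rcases sign_apply_eq x with h | h | h <;> simp [h]

lemma cos_sign_mul {x t : ℝ} (h : x = 0 → t = 0) : cos (sign x * t) = cos t := by
  rcases lt_trichotomy x 0 with hx | rfl | hx
  · rw [sign_of_neg hx, neg_one_mul, cos_neg]
  · simp [h rfl]
  · rw [sign_of_pos hx, one_mul]

lemma cosh_sign_mul {x t : ℝ} (h : x = 0 → t = 0) : cosh (sign x * t) = cosh t := by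
  rcases lt_trichotomy x 0 with hx | rfl | hx
  · rw [sign_of_neg hx, neg_one_mul, cosh_neg]
  · simp [h rfl]
  · rw [sign_of_pos hx, one_mul]

lemma cosh_half (x : ℝ) : cosh (x / 2) = √((cosh x + 1) / 2) := by
  have h := cosh_two_mul (x / 2)
  rw [mul_div_cancel₀ x two_ne_zero] at h
  rw [← sqrt_sq (cosh_pos (x / 2)).le]
  congr 1
  nlinarith [cosh_sq (x / 2)]

lemma sinh_half_of_nonneg {x : ℝ} (hx : 0 ≤ x) : sinh (x / 2) = √((cosh x - 1) / 2) := by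
  have h := cosh_two_mul (x / 2)
  rw [mul_div_cancel₀ x two_ne_zero] at h
  rw [← sqrt_sq (sinh_nonneg_iff.2 (by linarith))]
  congr 1
  nlinarith [cosh_sq (x / 2)]

lemma sin_half_arccos {x : ℝ} (hx₁ : -1 ≤ x) (hx₂ : x ≤ 1) :
    sin (arccos x / 2) = √((1 - x) / 2) := by
  rw [sin_half_eq_sqrt (arccos_nonneg x) (by linarith [arccos_le_pi x, pi_pos]),
    cos_arccos hx₁ hx₂]

lemma cos_half_arccos {x : ℝ} (hx₁ : -1 ≤ x) (hx₂ : x ≤ 1) :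
    cos (arccos x / 2) = √((1 + x) / 2) := by
  rw [cos_half (by linarith [arccos_nonneg x, pi_pos]) (arccos_le_pi x), cos_arccos hx₁ hx₂]

lemma cosh_half_arcosh {x : ℝ} (hx : 1 ≤ x) : cosh (arcosh x / 2) = √((x + 1) / 2) := by
  rw [cosh_half, cosh_arcosh hx]

lemma sinh_half_arcosh {x : ℝ} (hx : 1 ≤ x) : sinh (arcosh x / 2) = √((x - 1) / 2) := by
  rw [sinh_half_of_nonneg (arcosh_nonneg hx), cosh_arcosh hx]

end Real

namespace Complex

lemma sin_re (z : ℂ) : (sin z).re = Real.sin z.re * Real.cosh z.im := by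
  conv_lhs => rw [← re_add_im z, sin_add_mul_I]
  simp [sin_ofReal_re, cos_ofReal_re, sinh_ofReal_re, cosh_ofReal_re]

lemma sin_im (z : ℂ) : (sin z).im = Real.cos z.re * Real.sinh z.im := by
  conv_lhs => rw [← re_add_im z, sin_add_mul_I]
  simp [sin_ofReal_re, cos_ofReal_re, sinh_ofReal_re, cosh_ofReal_re]

lemma cos_re (z : ℂ) : (cos z).re = Real.cos z.re * Real.cosh z.im := by
  conv_lhs => rw [← re_add_im z, cos_add_mul_I]
  simp [sin_ofReal_re, cos_ofReal_re, sinh_ofReal_re, cosh_ofReal_re]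

lemma cos_im (z : ℂ) : (cos z).im = -(Real.sin z.re * Real.sinh z.im) := by
  conv_lhs => rw [← re_add_im z, cos_add_mul_I]
  simp [sin_ofReal_re, cos_ofReal_re, sinh_ofReal_re, cosh_ofReal_re]

end Complex

lemma ContinuousAt.sign_mul {X : Type*} [TopologicalSpace X] {f g : X → ℝ} {x : X}
    (hf : ContinuousAt f x) (hg : ContinuousAt g x) (h : f x = 0 → g x = 0) :
    ContinuousAt (fun y ↦ Real.sign (f y) * g y) x := by
  by_cases hfx : f x = 0
  · have hg₀ : Filter.Tendsto g (nhds x) (nhds 0) := h hfx ▸ hg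
    simp only [ContinuousAt, hfx, Real.sign_zero, zero_mul]
    refine squeeze_zero_norm (fun y ↦ ?_) (tendsto_norm_zero.comp hg₀)
    rw [norm_mul, Real.norm_eq_abs (Real.sign _)]
    exact mul_le_of_le_one_left (norm_nonneg _) (Real.abs_sign_le_one _)
  · have hsign : ∀ᶠ y in nhds x, Real.sign (f y) = Real.sign (f x) := by
      rcases lt_or_gt_of_ne hfx with hneg | hpos
      · filter_upwards [hf.eventually (gt_mem_nhds hneg)] with y hy
        rw [Real.sign_of_neg hy, Real.sign_of_neg hneg]
      · filter_upwards [hf.eventually (lt_mem_nhds hpos)] with y hy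
        rw [Real.sign_of_pos hy, Real.sign_of_pos hpos]
    have hc : ContinuousAt (fun y ↦ Real.sign (f x) * g y) x := continuousAt_const.mul hg
    exact hc.congr (by filter_upwards [hsign] with y hy; rw [hy])

lemma arcosh_eq_real_arcosh : arcosh = Real.arcosh := rfl

lemma mem_setB_iff {z : ℂ} : z ∈ setB ↔ (z.im = 0 → |z.re| ≤ 1) := by
  simp only [setB, Set.mem_ofPred_eq, not_and, not_or, not_lt, abs_le]

lemma mem_setA_of_abs_re_sub_pi_div_two_le {z : ℂ} (h : |z.re - Real.pi / 2| ≤ Real.pi / 2)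
    (him : |z.re - Real.pi / 2| = Real.pi / 2 → z.im = 0) : z ∈ setA := by
  rcases h.lt_or_eq with hlt | heq
  · left
    constructor <;> linarith [(abs_lt.1 hlt).1, (abs_lt.1 hlt).2]
  · right
    have hre : z = (z.re : ℂ) := Complex.ext rfl (by simp [him heq])
    rcases abs_eq (by positivity) |>.1 heq with h | h
    · exact Or.inr (by rw [hre]; congr 1; linarith)
    · exact Or.inl (by rw [hre]; norm_cast; linarith)

lemma re_mem_Icc_of_mem_setA {z : ℂ} (hz : z ∈ setA) : z.re ∈ Set.Icc 0 Real.pi := by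
  rcases hz with ⟨h₀, h₁⟩ | rfl | rfl
  · exact ⟨h₀.le, h₁.le⟩
  · simp [Real.pi_pos.le]
  · simp [Real.pi_pos.le]

lemma eq_re_of_mem_setA {z : ℂ} (hz : z ∈ setA) (h : z.re = 0 ∨ z.re = Real.pi) :
    z = (z.re : ℂ) := by
  rcases hz with ⟨h₀, h₁⟩ | rfl | rfl
  · rcases h with h | h <;> linarith
  · simp
  · simp

section G

variable (z : ℂ)

lemma sq_sqrt_G_radicand :
    √((z.re ^ 2 + z.im ^ 2 - 1) ^ 2 + 4 * z.im ^ 2) ^ 2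
      = (z.re ^ 2 + z.im ^ 2 - 1) ^ 2 + 4 * z.im ^ 2 :=
  Real.sq_sqrt (by positivity)

lemma one_sub_Gminus_mul_Gplus_add_one : (1 - Gminus z) * (Gplus z + 1) = 4 * z.re ^ 2 := by
  have := sq_sqrt_G_radicand z
  unfold Gminus Gplus
  linear_combination -this

lemma one_add_Gminus_mul_Gplus_sub_one : (1 + Gminus z) * (Gplus z - 1) = 4 * z.im ^ 2 := by
  have := sq_sqrt_G_radicand z
  unfold Gminus Gplus
  linear_combination this

lemma Gminus_le_one : Gminus z ≤ 1 := by
  have := sq_sqrt_G_radicand z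
  unfold Gminus
  nlinarith [Real.sqrt_nonneg ((z.re ^ 2 + z.im ^ 2 - 1) ^ 2 + 4 * z.im ^ 2), sq_nonneg z.re]

lemma neg_one_le_Gminus : -1 ≤ Gminus z := by
  have := sq_sqrt_G_radicand z
  unfold Gminus
  nlinarith [Real.sqrt_nonneg ((z.re ^ 2 + z.im ^ 2 - 1) ^ 2 + 4 * z.im ^ 2), sq_nonneg z.im]

lemma one_le_Gplus : 1 ≤ Gplus z := by
  have := sq_sqrt_G_radicand z
  unfold Gplus
  nlinarith [Real.sqrt_nonneg ((z.re ^ 2 + z.im ^ 2 - 1) ^ 2 + 4 * z.im ^ 2), sq_nonneg z.im]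

lemma sqrt_one_sub_Gminus_mul_sqrt_Gplus_add_one :
    √((1 - Gminus z) / 2) * √((Gplus z + 1) / 2) = |z.re| := by
  rw [← Real.sqrt_mul (by linarith [Gminus_le_one z]), ← Real.sqrt_sq_eq_abs]
  congr 1
  linear_combination one_sub_Gminus_mul_Gplus_add_one z / 4

lemma sqrt_one_add_Gminus_mul_sqrt_Gplus_sub_one :
    √((1 + Gminus z) / 2) * √((Gplus z - 1) / 2) = |z.im| := by
  rw [← Real.sqrt_mul (by linarith [neg_one_le_Gminus z]), ← Real.sqrt_sq_eq_abs]
  congr 1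
  linear_combination one_add_Gminus_mul_Gplus_sub_one z / 4

variable {z}

lemma arccos_Gminus_eq_zero (h : z.re = 0) : Real.arccos (Gminus z) = 0 := by
  have := one_sub_Gminus_mul_Gplus_add_one z
  rw [h] at this
  have : Gminus z = 1 := by nlinarith [one_le_Gplus z]
  rw [this, Real.arccos_one]

lemma arcosh_Gplus_eq_zero (hz : z ∈ setB) (h : z.im = 0) : Real.arcosh (Gplus z) = 0 := by
  have hre := abs_le.1 (mem_setB_iff.1 hz h)
  have : Gplus z = 1 := by
    unfold Gplus
    rw [h, show (z.re ^ 2 + 0 ^ 2 - 1) ^ 2 + 4 * 0 ^ 2 = (1 - z.re ^ 2) ^ 2 by ring,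
      Real.sqrt_sq (by nlinarith)]
    ring
  rw [this, Real.arcosh_zero]

lemma im_eq_zero_of_arccos_Gminus_eq_pi (h : Real.arccos (Gminus z) = Real.pi) : z.im = 0 := by
  have hG : Gminus z = -1 := le_antisymm (Real.arccos_eq_pi.1 h) (neg_one_le_Gminus z)
  have := one_add_Gminus_mul_Gplus_sub_one z
  rw [hG] at this
  nlinarith

lemma continuous_Gminus : Continuous Gminus := by
  unfold Gminus; fun_prop

lemma continuous_Gplus : Continuous Gplus := by
  unfold Gplus; fun_prop

end G

lemma carcsin_re (z : ℂ) : (carcsin z).re = Real.sign z.re * (Real.arccos (Gminus z) / 2) := by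
  simp [carcsin]; ring

lemma carcsin_im (z : ℂ) : (carcsin z).im = Real.sign z.im * (Real.arcosh (Gplus z) / 2) := by
  simp [carcsin, arcosh_eq_real_arcosh]; ring

lemma sin_carcsin {z : ℂ} (hz : z ∈ setB) : Complex.sin (carcsin z) = z := by
  apply Complex.ext
  · rw [Complex.sin_re, carcsin_re, carcsin_im, Real.sin_sign_mul,
      Real.cosh_sign_mul fun h ↦ by rw [arcosh_Gplus_eq_zero hz h, zero_div],
      Real.sin_half_arccos (neg_one_le_Gminus z) (Gminus_le_one z),
      Real.cosh_half_arcosh (one_le_Gplus z), mul_assoc,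
      sqrt_one_sub_Gminus_mul_sqrt_Gplus_add_one, Real.sign_mul_abs]
  · rw [Complex.sin_im, carcsin_re, carcsin_im, Real.sinh_sign_mul,
      Real.cos_sign_mul fun h ↦ by rw [arccos_Gminus_eq_zero h, zero_div],
      Real.cos_half_arccos (neg_one_le_Gminus z) (Gminus_le_one z),
      Real.sinh_half_arcosh (one_le_Gplus z), mul_left_comm,
      sqrt_one_add_Gminus_mul_sqrt_Gplus_sub_one, Real.sign_mul_abs]

lemma cos_carccos {z : ℂ} (hz : z ∈ setB) : Complex.cos (carccos z) = z := by
  rw [carccos, Complex.ofReal_div, Complex.ofReal_ofNat, Complex.cos_pi_div_two_sub,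
    sin_carcsin hz]

lemma carccos_re (z : ℂ) :
    (carccos z).re = Real.pi / 2 - Real.sign z.re * (Real.arccos (Gminus z) / 2) := by
  rw [carccos, Complex.sub_re, Complex.ofReal_re, carcsin_re]

lemma carccos_im (z : ℂ) :
    (carccos z).im = -(Real.sign z.im * (Real.arcosh (Gplus z) / 2)) := by
  rw [carccos, Complex.sub_im, Complex.ofReal_im, carcsin_im, zero_sub]

lemma mapsTo_carccos : Set.MapsTo carccos setB setA := by
  intro z _
  have hre : |(carccos z).re - Real.pi / 2| = |Real.sign z.re| * (Real.arccos (Gminus z) / 2) := by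
    rw [carccos_re, sub_sub_cancel_left, abs_neg, abs_mul,
      abs_of_nonneg (div_nonneg (Real.arccos_nonneg (Gminus z)) zero_le_two)]
  have hsign := Real.abs_sign_le_one z.re
  have hα₀ := Real.arccos_nonneg (Gminus z)
  have hα₁ := Real.arccos_le_pi (Gminus z)
  refine mem_setA_of_abs_re_sub_pi_div_two_le (by rw [hre]; nlinarith) fun h ↦ ?_
  have hα : Real.arccos (Gminus z) = Real.pi := by rw [hre] at h; nlinarith
  rw [carccos_im, im_eq_zero_of_arccos_Gminus_eq_pi hα, Real.sign_zero, zero_mul, neg_zero]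

lemma mapsTo_cos : Set.MapsTo Complex.cos setA setB := by
  intro z hz
  rw [mem_setB_iff]
  intro him
  rcases hz with ⟨h₀, h₁⟩ | rfl | rfl
  · have hsin : 0 < Real.sin z.re := Real.sin_pos_of_pos_of_lt_pi h₀ h₁
    rw [Complex.cos_im, neg_eq_zero, mul_eq_zero, or_iff_right hsin.ne', Real.sinh_eq_zero] at him
    rw [Complex.cos_re, him, Real.cosh_zero, mul_one]
    exact Real.abs_cos_le_one _
  · simp
  · simp

lemma injOn_cos : Set.InjOn Complex.cos setA := by
  intro x hx y hy h
  obtain ⟨hx₀, hx₁⟩ := re_mem_Icc_of_mem_setA hx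
  obtain ⟨hy₀, hy₁⟩ := re_mem_Icc_of_mem_setA hy
  have hπ := Real.pi_pos
  obtain ⟨k, hk | hk⟩ := Complex.cos_eq_cos_iff.1 h
  · have hre : y.re = 2 * k * Real.pi + x.re := by simpa using congrArg Complex.re hk
    have hk₀ : k = 0 := by
      have : (-1 : ℝ) < k := by nlinarith
      have : (k : ℝ) < 1 := by nlinarith
      norm_cast at *
      omega
    simpa [hk₀] using hk.symm
  · have hre : y.re = 2 * k * Real.pi - x.re := by simpa using congrArg Complex.re hk
    have hk₀₁ : k = 0 ∨ k = 1 := by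
      have : (-1 : ℝ) < k := by nlinarith
      have : (k : ℝ) < 2 := by nlinarith
      norm_cast at *
      omega
    have hxy : x.re = y.re ∧ (x.re = 0 ∨ x.re = Real.pi) := by
      rcases hk₀₁ with rfl | rfl
      · push_cast at hre; exact ⟨by linarith, Or.inl (by linarith)⟩
      · push_cast at hre; exact ⟨by linarith, Or.inr (by linarith)⟩
    rw [eq_re_of_mem_setA hx hxy.2, eq_re_of_mem_setA hy (hxy.1 ▸ hxy.2), hxy.1]

lemma continuousOn_carccos : ContinuousOn carccos setB := by
  intro z hz
  have hre : ContinuousAt (fun w : ℂ ↦ Real.sign w.re * Real.arccos (Gminus w)) z :=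
    Complex.continuous_re.continuousAt.sign_mul
      (Real.continuous_arccos.comp continuous_Gminus).continuousAt arccos_Gminus_eq_zero
  have him : ContinuousAt (fun w : ℂ ↦ Real.sign w.im * arcosh (Gplus w)) z :=
    Complex.continuous_im.continuousAt.sign_mul
      (Real.continuousOn_arcosh.comp_continuous continuous_Gplus one_le_Gplus).continuousAt
      (arcosh_Gplus_eq_zero hz)
  have hre' := Complex.continuous_ofReal.continuousAt.comp hre
  have him' := Complex.continuous_ofReal.continuousAt.comp him
  unfold carccos carcsin
  exact ContinuousAt.continuousWithinAt (by fun_prop)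

/-- `cos : A → B` and `arccos : B → A` are mutually inverse continuous bijections,
hence homeomorphisms. -/
theorem stmt3 :
    Set.BijOn Complex.cos setA setB ∧
    Set.BijOn carccos setB setA ∧
    (∀ z ∈ setB, Complex.cos (carccos z) = z) ∧
    (∀ z ∈ setA, carccos (Complex.cos z) = z) ∧
    ContinuousOn Complex.cos setA ∧
    ContinuousOn carccos setB := by
  have hcos_carccos : Set.LeftInvOn Complex.cos carccos setB := fun z hz ↦ cos_carccos hz
  have hcarccos_cos : Set.LeftInvOn carccos Complex.cos setA :=
    injOn_cos.rightInvOn_of_leftInvOn hcos_carccos mapsTo_cos mapsTo_carccos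
  have hinv : Set.InvOn carccos Complex.cos setA setB := ⟨hcarccos_cos, hcos_carccos⟩
  exact ⟨hinv.bijOn mapsTo_cos mapsTo_carccos, hinv.symm.bijOn mapsTo_carccos mapsTo_cos,
    hcos_carccos, hcarccos_cos, Complex.continuous_cos.continuousOn, continuousOn_carccos⟩
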